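/- arXiv:1905.12148 — 4 statements merged into one kernel-verified Lean document; each statement's English description precedes it below -/
import Mathlib

section
/- Let x₀ ∈ (0,1) be Q-rational, say x₀ = Σ_{i=1}^n c_i/(q_1⋯q_i) with integers 0 ≤ c_i ≤ q_i − 1 and c_n ≥ 1. Then the one-sided limits of f at x₀ exist and the jump satisfies lim_{x→x₀+} f(x) − lim_{x→x₀−} f(x) = 1/q^n − Σ_{j=n+1}^∞ (q_j − 1)/q^j ≥ 0. Moreover, if in addition q_j ≤ q − 1 for all j > n, then 1/((q−1)q^n) ≤ lim_{x→x₀+} f(x) − lim_{x→x₀−} f(x) ≤ (q−2)/((q−1)q^n), so x₀ is a point of discontinuity of f. -/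
/-! A Q-rational point `x₀ = 0.c₀…c_{n-1}` has a second Q-expansion
`0.c₀…c_{n-2}(c_{n-1} - 1)(q_{n+1} - 1)(q_{n+2} - 1)…`, whose partial sums of length `N ≥ n` lie
exactly `1/(q₁⋯q_N)` below `x₀`. Every point of `[y, y + 1/(q₁⋯q_N))`, where `y` is the sum of
`N` admissible digits, has these digits as its first `N` canonical digits, so there `f` is within
`q^{-N}` of the base-`q` number with the same digits. Hence the right limit of `f` at `x₀` is the
base-`q` value of the terminating expansion, the left limit that of the nonterminating one, and
their difference is `1/q^n - ∑_{j>n} (q_j - 1)/q^j`. -/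

open Filter Topology MeasureTheory

/-- Product `q_1 ⋯ q_n` of the first `n` bases (0-indexed sequence `a`). -/
noncomputable def cantorProd (a : ℕ → ℕ) (n : ℕ) : ℕ := ∏ j ∈ Finset.range n, a j

/-- The canonical Q-digit of `x` at (0-indexed) position `n`:
`ε_{n+1}(x) = ⌊q_1⋯q_{n+1} x⌋ - q_{n+1} ⌊q_1⋯q_n x⌋`. -/
noncomputable def cantorDigit (a : ℕ → ℕ) (x : ℝ) (n : ℕ) : ℤ :=
  ⌊(cantorProd a (n + 1) : ℝ) * x⌋ - (a n : ℤ) * ⌊(cantorProd a n : ℝ) * x⌋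

/-- The function `f`: for `x < 1`, `f(x) = ∑ ε_n(x)/q^n`; `f(1) = ∑ (q_n - 1)/q^n`. -/
noncomputable def cantorF (a : ℕ → ℕ) (q : ℕ) (x : ℝ) : ℝ :=
  if x < 1 then ∑' n : ℕ, (cantorDigit a x n : ℝ) / (q : ℝ) ^ (n + 1)
  else ∑' n : ℕ, ((a n : ℝ) - 1) / (q : ℝ) ^ (n + 1)

/-- `x ∈ (0,1)` is Q-rational if it is a finite sum `∑_{i=1}^m c_i/(q_1⋯q_i)`
with digits `0 ≤ c_i ≤ q_i - 1`. -/
def QRational (a : ℕ → ℕ) (x : ℝ) : Prop :=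
  x ∈ Set.Ioo (0 : ℝ) 1 ∧
    ∃ m : ℕ, 1 ≤ m ∧ ∃ c : ℕ → ℕ, (∀ i, c i < a i) ∧
      x = ∑ i ∈ Finset.range m, (c i : ℝ) / ∏ j ∈ Finset.range (i + 1), (a j : ℝ)

open Finset

lemma cantorProd_succ (a : ℕ → ℕ) (k : ℕ) : cantorProd a (k + 1) = cantorProd a k * a k :=
  prod_range_succ a k

lemma cantorProd_pos {a : ℕ → ℕ} (ha : ∀ j, 0 < a j) (k : ℕ) : 0 < cantorProd a k :=
  prod_pos fun j _ => ha j

lemma cantorProd_mul_prod_Ico (a : ℕ → ℕ) {k N : ℕ} (h : k ≤ N) :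
    cantorProd a k * ∏ j ∈ Ico k N, a j = cantorProd a N :=
  prod_range_mul_prod_Ico a h

lemma cantorDigit_eq_floor (a : ℕ → ℕ) (x : ℝ) (k : ℕ) :
    cantorDigit a x k = ⌊(a k : ℝ) * Int.fract ((cantorProd a k : ℝ) * x)⌋ := by
  rw [cantorDigit, ← Int.self_sub_floor, mul_sub, cantorProd_succ, Nat.cast_mul,
    mul_comm _ (a k : ℝ), mul_assoc, ← Int.cast_natCast (a k), ← Int.cast_mul,
    Int.floor_sub_intCast]

lemma cantorDigit_nonneg (a : ℕ → ℕ) (x : ℝ) (k : ℕ) : 0 ≤ cantorDigit a x k := by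
  rw [cantorDigit_eq_floor]
  exact Int.floor_nonneg.2 (mul_nonneg (Nat.cast_nonneg _) (Int.fract_nonneg _))

lemma cantorDigit_lt {a : ℕ → ℕ} {k : ℕ} (ha : 0 < a k) (x : ℝ) : cantorDigit a x k < a k := by
  rw [cantorDigit_eq_floor, Int.floor_lt]
  push_cast
  exact mul_lt_of_lt_one_right (by exact_mod_cast ha) (Int.fract_lt_one _)

def cantorNumeral (a d : ℕ → ℕ) : ℕ → ℕ
  | 0 => 0
  | N + 1 => a N * cantorNumeral a d N + d N

lemma cantorNumeral_div_prod_Ico {a d : ℕ → ℕ} {N : ℕ} (hd : ∀ i < N, d i < a i) {k : ℕ}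
    (hk : k ≤ N) : cantorNumeral a d N / ∏ j ∈ Ico k N, a j = cantorNumeral a d k := by
  induction N, hk using Nat.le_induction with
  | base => simp
  | succ N hkN ih =>
    have hdN := hd N N.lt_succ_self
    rw [prod_Ico_succ_top hkN, mul_comm, ← Nat.div_div_eq_div_mul, cantorNumeral,
      Nat.mul_add_div (Nat.zero_lt_of_lt hdN), Nat.div_eq_of_lt hdN, add_zero]
    exact ih fun i hi => hd i (by omega)

lemma cantorNumeral_lt_cantorProd {a d : ℕ → ℕ} {N : ℕ} (hd : ∀ i < N, d i < a i) :
    cantorNumeral a d N < cantorProd a N := by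
  induction N with
  | zero => simp [cantorNumeral, cantorProd]
  | succ N ih =>
    have hdN := hd N N.lt_succ_self
    have hD := ih fun i hi => hd i (by omega)
    rw [cantorNumeral, cantorProd_succ]
    nlinarith

lemma floor_cantorProd_mul {a d : ℕ → ℕ} (ha : ∀ j, 0 < a j) {N : ℕ}
    (hd : ∀ i < N, d i < a i) {r : ℝ} (hr : r ∈ Set.Ico 0 1) {k : ℕ} (hk : k ≤ N) :
    ⌊(cantorProd a k : ℝ) * ((cantorNumeral a d N + r) / cantorProd a N)⌋ =
      cantorNumeral a d k := by
  have hP : (cantorProd a k : ℝ) ≠ 0 := by exact_mod_cast (cantorProd_pos ha k).ne'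
  rw [← cantorProd_mul_prod_Ico a hk, Nat.cast_mul, ← mul_div_assoc, mul_div_mul_left _ _ hP,
    Int.floor_div_natCast, Int.floor_natCast_add, Int.floor_eq_zero_iff.2 hr, add_zero,
    ← Int.natCast_div, cantorNumeral_div_prod_Ico hd hk]

lemma cantorDigit_cantorNumeral_add {a d : ℕ → ℕ} (ha : ∀ j, 0 < a j) {N : ℕ}
    (hd : ∀ i < N, d i < a i) {r : ℝ} (hr : r ∈ Set.Ico 0 1) {k : ℕ} (hk : k < N) :
    cantorDigit a ((cantorNumeral a d N + r) / cantorProd a N) k = d k := by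
  rw [cantorDigit, floor_cantorProd_mul ha hd hr hk, floor_cantorProd_mul ha hd hr hk.le,
    cantorNumeral]
  push_cast
  ring

noncomputable def cantorPartialSum (a d : ℕ → ℕ) (N : ℕ) : ℝ :=
  ∑ i ∈ range N, (d i : ℝ) / cantorProd a (i + 1)

lemma cantorPartialSum_eq {a : ℕ → ℕ} (ha : ∀ j, 0 < a j) (d : ℕ → ℕ) (N : ℕ) :
    cantorPartialSum a d N = cantorNumeral a d N / cantorProd a N := by
  induction N with
  | zero => simp [cantorPartialSum, cantorNumeral]
  | succ N ih =>
    have hP : (cantorProd a N : ℝ) ≠ 0 := by exact_mod_cast (cantorProd_pos ha N).ne'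
    have haN : (a N : ℝ) ≠ 0 := by exact_mod_cast (ha N).ne'
    rw [cantorPartialSum, sum_range_succ, ← cantorPartialSum, ih, cantorNumeral, cantorProd_succ]
    push_cast
    field_simp

lemma cantorPartialSum_lt_one {a d : ℕ → ℕ} (hd : ∀ i, d i < a i) (N : ℕ) :
    cantorPartialSum a d N < 1 := by
  have hP : (0 : ℝ) < cantorProd a N := by
    exact_mod_cast cantorProd_pos (fun j => Nat.zero_lt_of_lt (hd j)) N
  rw [cantorPartialSum_eq (fun j => Nat.zero_lt_of_lt (hd j)), div_lt_one hP]
  exact_mod_cast cantorNumeral_lt_cantorProd fun i _ => hd i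

lemma cantorDigit_eq_of_mem_Ico {a d : ℕ → ℕ} (ha : ∀ j, 0 < a j) {N : ℕ}
    (hd : ∀ i < N, d i < a i) {x : ℝ}
    (hx : x ∈ Set.Ico (cantorPartialSum a d N) (cantorPartialSum a d N + (cantorProd a N : ℝ)⁻¹))
    {k : ℕ} (hk : k < N) : cantorDigit a x k = d k := by
  have hP : (0 : ℝ) < cantorProd a N := by exact_mod_cast cantorProd_pos ha N
  rw [cantorPartialSum_eq ha] at hx
  have hr : cantorProd a N * x - cantorNumeral a d N ∈ Set.Ico (0 : ℝ) 1 := by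
    rw [div_add' _ _ _ hP.ne', mul_comm, Set.mem_Ico, div_le_iff₀ hP, lt_div_iff₀ hP,
      mul_inv_cancel₀ hP.ne'] at hx
    constructor <;> linarith [hx.1, hx.2]
  have hxr : x = (cantorNumeral a d N + (cantorProd a N * x - cantorNumeral a d N)) /
      cantorProd a N := by
    field_simp
    ring
  rw [hxr]
  exact cantorDigit_cantorNumeral_add ha hd hr hk

lemma exists_cantorF_eq_ofDigits {a : ℕ → ℕ} {q : ℕ} (ha : ∀ k, 0 < a k) (haq : ∀ k, a k ≤ q)
    {x : ℝ} (hx : x < 1) :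
    ∃ e : ℕ → Fin q, (∀ k, ((e k : ℕ) : ℤ) = cantorDigit a x k) ∧
      cantorF a q x = Real.ofDigits e := by
  have he : ∀ k, (cantorDigit a x k).toNat < q := fun k => by
    have := cantorDigit_lt (ha k) x
    have := ha k
    have := haq k
    omega
  have hcast : ∀ k, (((cantorDigit a x k).toNat : ℕ) : ℤ) = cantorDigit a x k :=
    fun k => Int.toNat_of_nonneg (cantorDigit_nonneg a x k)
  refine ⟨fun k => ⟨_, he k⟩, hcast, ?_⟩
  rw [cantorF, if_pos hx, Real.ofDigits]
  refine tsum_congr fun k => ?_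
  rw [Real.ofDigitsTerm, div_eq_mul_inv]
  congr 1
  exact_mod_cast (hcast k).symm

lemma abs_cantorF_sub_ofDigits_le {a : ℕ → ℕ} {q : ℕ} (haq : ∀ k, a k ≤ q) {d : ℕ → Fin q}
    (hd : ∀ i, (d i : ℕ) < a i) {N : ℕ} {x : ℝ} (hx1 : x < 1)
    (hx : x ∈ Set.Ico (cantorPartialSum a (fun i => d i) N)
      (cantorPartialSum a (fun i => d i) N + (cantorProd a N : ℝ)⁻¹)) :
    |cantorF a q x - Real.ofDigits d| ≤ ((q : ℝ) ^ N)⁻¹ := by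
  have ha : ∀ k, 0 < a k := fun k => Nat.zero_lt_of_lt (hd k)
  obtain ⟨e, he, hfe⟩ := exists_cantorF_eq_ofDigits ha haq hx1
  rw [hfe]
  refine Real.abs_ofDigits_sub_ofDigits_le fun i hi => Fin.ext ?_
  have := cantorDigit_eq_of_mem_Ico ha (fun i _ => hd i) hx hi
  have := he i
  omega

lemma tendsto_cantorF_ofDigits {a : ℕ → ℕ} {q : ℕ} (hq : 1 < q) (haq : ∀ k, a k ≤ q)
    {d : ℕ → Fin q} (hd : ∀ i, (d i : ℕ) < a i) {l : Filter ℝ} (hl1 : ∀ᶠ x in l, x < 1)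
    (hl : ∀ᶠ N in atTop, ∀ᶠ x in l, x ∈ Set.Ico (cantorPartialSum a (fun i => d i) N)
      (cantorPartialSum a (fun i => d i) N + (cantorProd a N : ℝ)⁻¹)) :
    Tendsto (cantorF a q) l (𝓝 (Real.ofDigits d)) := by
  rw [Metric.tendsto_nhds]
  intro ε hε
  have hsmall : ∀ᶠ N in atTop, ((q : ℝ) ^ N)⁻¹ < ε :=
    (tendsto_inv_atTop_zero.comp (tendsto_pow_atTop_atTop_of_one_lt
      (by exact_mod_cast hq))).eventually (gt_mem_nhds hε)
  obtain ⟨N, hN, hNε⟩ := (hl.and hsmall).exists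
  filter_upwards [hN, hl1] with x hx hx1
  rw [Real.dist_eq]
  exact (abs_cantorF_sub_ofDigits_le haq hd hx1 hx).trans_lt hNε

lemma hasSum_mul_inv_pow_succ {b : ℝ} (hb : 1 < b) (c : ℝ) :
    HasSum (fun i : ℕ => c * (b ^ (i + 1))⁻¹) (c / (b - 1)) := by
  have hb0 : 0 < b := by linarith
  have hgeom := (hasSum_geometric_of_lt_one (inv_nonneg.2 hb0.le)
    (inv_lt_one_of_one_lt₀ hb)).mul_left (c * b⁻¹)
  have hterm : (fun i : ℕ => c * (b ^ (i + 1))⁻¹) = fun i => c * b⁻¹ * b⁻¹ ^ i := by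
    ext i
    rw [pow_succ, mul_inv, inv_pow]
    ring
  have hsum : c / (b - 1) = c * b⁻¹ * (1 - b⁻¹)⁻¹ := by
    have : b - 1 ≠ 0 := by linarith
    field_simp
  rw [hterm, hsum]
  exact hgeom

lemma div_le_ofDigits {b : ℕ} (hb : 1 < b) {d : ℕ → Fin b} {c : ℝ} (h : ∀ i, c ≤ (d i : ℝ)) :
    c / (b - 1) ≤ Real.ofDigits d :=
  hasSum_le (fun i => mul_le_mul_of_nonneg_right (h i) (by positivity))
    (hasSum_mul_inv_pow_succ (by exact_mod_cast hb) c) Real.summable_ofDigitsTerm.hasSum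

lemma ofDigits_le_div {b : ℕ} (hb : 1 < b) {d : ℕ → Fin b} {c : ℝ} (h : ∀ i, (d i : ℝ) ≤ c) :
    Real.ofDigits d ≤ c / (b - 1) :=
  hasSum_le (fun i => mul_le_mul_of_nonneg_right (h i) (by positivity))
    Real.summable_ofDigitsTerm.hasSum (hasSum_mul_inv_pow_succ (by exact_mod_cast hb) c)

lemma not_continuousWithinAt_of_tendsto_ne {f : ℝ → ℝ} {s : Set ℝ} {x₀ L R : ℝ}
    (hs : s ∈ 𝓝 x₀) (hL : Tendsto f (𝓝[<] x₀) (𝓝 L)) (hR : Tendsto f (𝓝[>] x₀) (𝓝 R))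
    (hLR : L ≠ R) : ¬ ContinuousWithinAt f s x₀ := fun h => by
  have hf := (h.continuousAt hs).tendsto
  exact hLR ((tendsto_nhds_unique hL (hf.mono_left nhdsWithin_le_nhds)).trans
    (tendsto_nhds_unique hR (hf.mono_left nhdsWithin_le_nhds)).symm)

def terminatingDigits (c : ℕ → ℕ) (n i : ℕ) : ℕ := if i < n then c i else 0

def nonterminatingDigits (a c : ℕ → ℕ) (n i : ℕ) : ℕ :=
  if i + 1 < n then c i else if i + 1 = n then c i - 1 else a i - 1

section QRational

variable {a c : ℕ → ℕ} {n : ℕ}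

lemma terminatingDigits_lt (hc : ∀ i, c i < a i) (i : ℕ) : terminatingDigits c n i < a i := by
  have := hc i
  unfold terminatingDigits
  split_ifs <;> omega

lemma nonterminatingDigits_lt (hc : ∀ i, c i < a i) (i : ℕ) :
    nonterminatingDigits a c n i < a i := by
  have := hc i
  unfold nonterminatingDigits
  split_ifs <;> omega

lemma nonterminatingDigits_add (i : ℕ) : nonterminatingDigits a c n (i + n) = a (i + n) - 1 := by
  rw [nonterminatingDigits, if_neg (by omega), if_neg (by omega)]

lemma cantorPartialSum_terminatingDigits {N : ℕ} (hN : n ≤ N) :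
    cantorPartialSum a (terminatingDigits c n) N = cantorPartialSum a c n := by
  induction N, hN using Nat.le_induction with
  | base =>
    exact sum_congr rfl fun i hi => by rw [terminatingDigits, if_pos (mem_range.1 hi)]
  | succ N hnN ih =>
    rw [cantorPartialSum, sum_range_succ, ← cantorPartialSum, ih, terminatingDigits,
      if_neg (by omega), Nat.cast_zero, zero_div, add_zero]

lemma cantorPartialSum_nonterminatingDigits (ha : ∀ j, 0 < a j) (hn : 1 ≤ n)
    (hcn : 1 ≤ c (n - 1)) {N : ℕ} (hN : n ≤ N) :
    cantorPartialSum a (nonterminatingDigits a c n) N =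
      cantorPartialSum a c n - (cantorProd a N : ℝ)⁻¹ := by
  induction N, hN using Nat.le_induction with
  | base =>
    obtain ⟨m, rfl⟩ : ∃ m, n = m + 1 := ⟨n - 1, by omega⟩
    rw [Nat.add_sub_cancel] at hcn
    have hhead : ∀ i ∈ range m, (nonterminatingDigits a c (m + 1) i : ℝ) / cantorProd a (i + 1)
        = c i / cantorProd a (i + 1) := fun i hi => by
      rw [nonterminatingDigits, if_pos (by simpa using hi)]
    have hP : (cantorProd a (m + 1) : ℝ) ≠ 0 := by exact_mod_cast (cantorProd_pos ha _).ne'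
    rw [cantorPartialSum, cantorPartialSum, sum_range_succ, sum_range_succ, sum_congr rfl hhead,
      nonterminatingDigits, if_neg (by omega), if_pos rfl, Nat.cast_sub hcn]
    field_simp
    ring
  | succ N hnN ih =>
    have hP : (cantorProd a N : ℝ) ≠ 0 := by exact_mod_cast (cantorProd_pos ha N).ne'
    have haN : (a N : ℝ) ≠ 0 := by exact_mod_cast (ha N).ne'
    rw [cantorPartialSum, sum_range_succ, ← cantorPartialSum, ih, nonterminatingDigits,
      if_neg (by omega), if_neg (by omega), cantorProd_succ, Nat.cast_sub (ha N)]
    push_cast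
    field_simp
    ring

lemma cantorPartialSum_pos (ha : ∀ j, 0 < a j) (hn : 1 ≤ n) (hcn : 1 ≤ c (n - 1)) :
    0 < cantorPartialSum a c n := by
  obtain ⟨m, rfl⟩ : ∃ m, n = m + 1 := ⟨n - 1, by omega⟩
  rw [Nat.add_sub_cancel] at hcn
  rw [cantorPartialSum_eq ha, cantorNumeral]
  exact div_pos (by exact_mod_cast (by omega : 0 < a m * cantorNumeral a c m + c m))
    (by exact_mod_cast cantorProd_pos ha _)

variable {q : ℕ}

lemma tendsto_cantorF_nhdsGT (hq : 1 < q) (haq : ∀ k, a k ≤ q) {d : ℕ → Fin q}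
    (hd : ∀ i, (d i : ℕ) < a i) {x₀ : ℝ} (hx₀ : x₀ < 1)
    (hsum : ∀ N ≥ n, cantorPartialSum a (fun i => d i) N = x₀) :
    Tendsto (cantorF a q) (𝓝[>] x₀) (𝓝 (Real.ofDigits d)) := by
  refine tendsto_cantorF_ofDigits hq haq hd (nhdsWithin_le_nhds (Iio_mem_nhds hx₀)) ?_
  filter_upwards [eventually_ge_atTop n] with N hN
  have hP : (0 : ℝ) < (cantorProd a N : ℝ)⁻¹ := by
    have := cantorProd_pos (fun j => Nat.zero_lt_of_lt (hd j)) N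
    positivity
  rw [hsum N hN]
  filter_upwards [Ioo_mem_nhdsGT (lt_add_of_pos_right x₀ hP)] with x hx using ⟨hx.1.le, hx.2⟩

lemma tendsto_cantorF_nhdsLT (hq : 1 < q) (haq : ∀ k, a k ≤ q) {d : ℕ → Fin q}
    (hd : ∀ i, (d i : ℕ) < a i) {x₀ : ℝ} (hx₀ : x₀ < 1)
    (hsum : ∀ N ≥ n, cantorPartialSum a (fun i => d i) N = x₀ - (cantorProd a N : ℝ)⁻¹) :
    Tendsto (cantorF a q) (𝓝[<] x₀) (𝓝 (Real.ofDigits d)) := by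
  refine tendsto_cantorF_ofDigits hq haq hd (nhdsWithin_le_nhds (Iio_mem_nhds hx₀)) ?_
  filter_upwards [eventually_ge_atTop n] with N hN
  have hP : (0 : ℝ) < (cantorProd a N : ℝ)⁻¹ := by
    have := cantorProd_pos (fun j => Nat.zero_lt_of_lt (hd j)) N
    positivity
  rw [hsum N hN, sub_add_cancel]
  filter_upwards [Ioo_mem_nhdsLT (sub_lt_self x₀ hP)] with x hx using ⟨hx.1.le, hx.2⟩

lemma ofDigits_sub_ofDigits_eq (hn : 1 ≤ n) (hcn : 1 ≤ c (n - 1)) {dR dL : ℕ → Fin q}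
    (hR : ∀ i, (dR i : ℕ) = terminatingDigits c n i)
    (hL : ∀ i, (dL i : ℕ) = nonterminatingDigits a c n i) :
    Real.ofDigits dR - Real.ofDigits dL =
      ((q : ℝ) ^ n)⁻¹ * (1 - Real.ofDigits fun i => dL (i + n)) := by
  have htailR : Real.ofDigits (fun i => dR (i + n)) = 0 := by
    simp [Real.ofDigits, Real.ofDigitsTerm, hR, terminatingDigits]
  have hhead : ∑ i ∈ range n, Real.ofDigitsTerm dR i =
      ∑ i ∈ range n, Real.ofDigitsTerm dL i + ((q : ℝ) ^ n)⁻¹ := by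
    obtain ⟨m, rfl⟩ : ∃ m, n = m + 1 := ⟨n - 1, by omega⟩
    rw [Nat.add_sub_cancel] at hcn
    have hfirst : ∀ i ∈ range m, Real.ofDigitsTerm dR i = Real.ofDigitsTerm dL i :=
      fun i hi => by
        have hi' : i < m := mem_range.1 hi
        rw [Real.ofDigitsTerm, Real.ofDigitsTerm, hR, hL, terminatingDigits, nonterminatingDigits,
          if_pos (by omega), if_pos (by omega)]
    rw [sum_range_succ, sum_range_succ, sum_congr rfl hfirst, Real.ofDigitsTerm,
      Real.ofDigitsTerm, hR, hL, terminatingDigits, nonterminatingDigits, if_pos (by omega),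
      if_neg (by omega), if_pos rfl, Nat.cast_sub hcn]
    push_cast
    ring
  rw [Real.ofDigits_eq_sum_add_ofDigits dR n, Real.ofDigits_eq_sum_add_ofDigits dL n, htailR,
    hhead]
  ring

lemma tsum_eq_ofDigits_shift (ha : ∀ j, 0 < a j) {dL : ℕ → Fin q}
    (hL : ∀ i, (dL i : ℕ) = nonterminatingDigits a c n i) :
    ∑' j : ℕ, ((a (n + j) : ℝ) - 1) / (q : ℝ) ^ (n + j + 1) =
      ((q : ℝ) ^ n)⁻¹ * Real.ofDigits fun i => dL (i + n) := by
  rw [Real.ofDigits, ← tsum_mul_left]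
  refine tsum_congr fun j => ?_
  rw [Real.ofDigitsTerm, hL, nonterminatingDigits_add, Nat.cast_sub (ha _), add_comm j n,
    div_eq_mul_inv, add_assoc, pow_add, mul_inv]
  push_cast
  ring

lemma ofDigits_sub_ofDigits_mem_Icc (ha : ∀ j, 2 ≤ a j) (hn : 1 ≤ n) (hcn : 1 ≤ c (n - 1))
    (hsmall : ∀ j, n ≤ j → a j ≤ q - 1) {dR dL : ℕ → Fin q}
    (hR : ∀ i, (dR i : ℕ) = terminatingDigits c n i)
    (hL : ∀ i, (dL i : ℕ) = nonterminatingDigits a c n i) :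
    1 / (((q : ℝ) - 1) * (q : ℝ) ^ n) ≤ Real.ofDigits dR - Real.ofDigits dL ∧
      Real.ofDigits dR - Real.ofDigits dL ≤ ((q : ℝ) - 2) / (((q : ℝ) - 1) * (q : ℝ) ^ n) := by
  have hq : 2 < q := by
    have := ha n
    have := hsmall n le_rfl
    omega
  have hq1 : (1 : ℝ) < q - 1 := by
    have : (2 : ℝ) < q := by exact_mod_cast hq
    linarith
  have hdigit : ∀ i, (1 : ℕ) ≤ dL (i + n) ∧ (dL (i + n) : ℕ) + 2 ≤ q := fun i => by
    have := ha (i + n)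
    have := hsmall (i + n) (by omega)
    rw [hL, nonterminatingDigits_add]
    omega
  have hlo : 1 / ((q : ℝ) - 1) ≤ Real.ofDigits fun i => dL (i + n) :=
    div_le_ofDigits (by omega) fun i => by exact_mod_cast (hdigit i).1
  have hhi : (Real.ofDigits fun i => dL (i + n)) ≤ ((q : ℝ) - 2) / ((q : ℝ) - 1) :=
    ofDigits_le_div (by omega) fun i => by
      have : ((dL (i + n) : ℕ) : ℝ) + 2 ≤ q := by exact_mod_cast (hdigit i).2
      linarith
  have hqn : (0 : ℝ) < ((q : ℝ) ^ n)⁻¹ := by positivity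
  rw [ofDigits_sub_ofDigits_eq hn hcn hR hL]
  constructor
  · calc 1 / (((q : ℝ) - 1) * (q : ℝ) ^ n) = ((q : ℝ) ^ n)⁻¹ * (1 - (q - 2) / (q - 1)) := by
          field_simp
          ring
      _ ≤ _ := by gcongr
  · calc _ ≤ ((q : ℝ) ^ n)⁻¹ * (1 - 1 / (q - 1)) := by gcongr
      _ = ((q : ℝ) - 2) / (((q : ℝ) - 1) * (q : ℝ) ^ n) := by
          field_simp
          ring

end QRational

theorem stmt4_general (q : ℕ) (a : ℕ → ℕ) (ha : ∀ n, 2 ≤ a n ∧ a n ≤ q)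
    (x₀ : ℝ)
    (n : ℕ) (hn : 1 ≤ n) (c : ℕ → ℕ) (hc : ∀ i, c i < a i) (hcn : 1 ≤ c (n - 1))
    (hx : x₀ = ∑ i ∈ Finset.range n, (c i : ℝ) / ∏ j ∈ Finset.range (i + 1), (a j : ℝ)) :
    ∃ L R : ℝ,
      Tendsto (cantorF a q) (nhdsWithin x₀ (Set.Ico (0 : ℝ) x₀)) (nhds L) ∧
      Tendsto (cantorF a q) (nhdsWithin x₀ (Set.Ioc x₀ (1 : ℝ))) (nhds R) ∧
      R - L = 1 / (q : ℝ) ^ n - ∑' j : ℕ, ((a (n + j) : ℝ) - 1) / (q : ℝ) ^ (n + j + 1) ∧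
      0 ≤ R - L ∧
      ((∀ j, n ≤ j → a j ≤ q - 1) →
        1 / (((q : ℝ) - 1) * (q : ℝ) ^ n) ≤ R - L ∧
        R - L ≤ ((q : ℝ) - 2) / (((q : ℝ) - 1) * (q : ℝ) ^ n) ∧
        ¬ ContinuousWithinAt (cantorF a q) (Set.Icc (0 : ℝ) 1) x₀) := by
  have hpos : ∀ j, 0 < a j := fun j => by have := (ha j).1; omega
  have haq : ∀ j, a j ≤ q := fun j => (ha j).2
  have hq : 1 < q := by have := ha 0; omega
  replace hx : x₀ = cantorPartialSum a c n := by simp [hx, cantorPartialSum, cantorProd]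
  have hx₀ : x₀ ∈ Set.Ioo 0 1 :=
    ⟨hx ▸ cantorPartialSum_pos hpos hn hcn, hx ▸ cantorPartialSum_lt_one hc n⟩
  obtain ⟨dR, hdR⟩ : ∃ d : ℕ → Fin q, ∀ i, (d i : ℕ) = terminatingDigits c n i :=
    ⟨fun i => ⟨_, (terminatingDigits_lt hc i).trans_le (haq i)⟩, fun _ => rfl⟩
  obtain ⟨dL, hdL⟩ : ∃ d : ℕ → Fin q, ∀ i, (d i : ℕ) = nonterminatingDigits a c n i :=
    ⟨fun i => ⟨_, (nonterminatingDigits_lt hc i).trans_le (haq i)⟩, fun _ => rfl⟩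
  have hR : Tendsto (cantorF a q) (𝓝[>] x₀) (𝓝 (Real.ofDigits dR)) :=
    tendsto_cantorF_nhdsGT hq haq (fun i => hdR i ▸ terminatingDigits_lt hc i) hx₀.2
      fun N (hN : N ≥ n) => by simp only [hdR, hx, cantorPartialSum_terminatingDigits hN]
  have hL : Tendsto (cantorF a q) (𝓝[<] x₀) (𝓝 (Real.ofDigits dL)) :=
    tendsto_cantorF_nhdsLT hq haq (fun i => hdL i ▸ nonterminatingDigits_lt hc i) hx₀.2
      fun N (hN : N ≥ n) => by
        simp only [hdL, hx, cantorPartialSum_nonterminatingDigits hpos hn hcn hN]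
  have hjump := ofDigits_sub_ofDigits_eq hn hcn hdR hdL
  refine ⟨_, _, (nhdsWithin_Ico_eq_nhdsLT hx₀.1).symm ▸ hL,
    (nhdsWithin_Ioc_eq_nhdsGT hx₀.2).symm ▸ hR,
    by rw [hjump, tsum_eq_ofDigits_shift hpos hdL]; ring,
    hjump ▸ mul_nonneg (by positivity) (sub_nonneg.2 (Real.ofDigits_le_one _)), fun hsmall => ?_⟩
  obtain ⟨hlo, hhi⟩ := ofDigits_sub_ofDigits_mem_Icc (fun j => (ha j).1) hn hcn hsmall hdR hdL
  have hgap : (0 : ℝ) < 1 / (((q : ℝ) - 1) * (q : ℝ) ^ n) :=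
    one_div_pos.2 (mul_pos (sub_pos.2 (by exact_mod_cast hq)) (by positivity))
  exact ⟨hlo, hhi, not_continuousWithinAt_of_tendsto_ne (Icc_mem_nhds hx₀.1 hx₀.2) hL hR
    (sub_pos.1 (hgap.trans_le hlo)).ne⟩

/-- digits of the finite representation are 0-indexed: `c i` is the
paper's `c_{i+1}`, and the last digit is `c (n-1)`.  At a Q-rational point
`x₀ = ∑_{i=1}^n c_i/(q_1⋯q_i)` with `c_n ≥ 1`, the one-sided limits of `f` exist, the
jump equals `1/q^n - ∑_{j>n} (q_j - 1)/q^j ≥ 0`, and if moreover `q_j ≤ q - 1` for all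
`j > n` then the jump lies in `[1/((q-1)q^n), (q-2)/((q-1)q^n)]`, so `f` is
discontinuous at `x₀`. -/
theorem stmt4 (q : ℕ) (hq : 2 ≤ q) (a : ℕ → ℕ) (ha : ∀ n, 2 ≤ a n ∧ a n ≤ q)
    (x₀ : ℝ) (hx₀ : x₀ ∈ Set.Ioo (0 : ℝ) 1)
    (n : ℕ) (hn : 1 ≤ n) (c : ℕ → ℕ) (hc : ∀ i, c i < a i) (hcn : 1 ≤ c (n - 1))
    (hx : x₀ = ∑ i ∈ Finset.range n, (c i : ℝ) / ∏ j ∈ Finset.range (i + 1), (a j : ℝ)) :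
    ∃ L R : ℝ,
      Tendsto (cantorF a q) (nhdsWithin x₀ (Set.Ico (0 : ℝ) x₀)) (nhds L) ∧
      Tendsto (cantorF a q) (nhdsWithin x₀ (Set.Ioc x₀ (1 : ℝ))) (nhds R) ∧
      R - L = 1 / (q : ℝ) ^ n - ∑' j : ℕ, ((a (n + j) : ℝ) - 1) / (q : ℝ) ^ (n + j + 1) ∧
      0 ≤ R - L ∧
      ((∀ j, n ≤ j → a j ≤ q - 1) →
        1 / (((q : ℝ) - 1) * (q : ℝ) ^ n) ≤ R - L ∧
        R - L ≤ ((q : ℝ) - 2) / (((q : ℝ) - 1) * (q : ℝ) ^ n) ∧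
        ¬ ContinuousWithinAt (cantorF a q) (Set.Icc (0 : ℝ) 1) x₀) :=
  stmt4_general q a ha x₀ n hn c hc hcn hx
end

section
/- The set D is nowhere dense in ℝ and has Lebesgue measure zero. -/
open Filter Topology MeasureTheory

/-- `α` is a sequence with all terms in `Θ = {1,…,q-1} \ {u}`. -/
def ThetaSeq (q u : ℕ) (α : ℕ → ℕ) : Prop :=
  ∀ n, 1 ≤ α n ∧ α n ≤ q - 1 ∧ α n ≠ u

/-- `S_{n+1}(α) = α_1 + ⋯ + α_{n+1}` (0-indexed: `α i` is the paper's `α_{i+1}`). -/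
def Ssum (α : ℕ → ℕ) (n : ℕ) : ℕ := ∑ i ∈ Finset.range (n + 1), α i

/-- `h(α) = u/(q-1) + ∑_{n≥1} (α_n - u) q^{-S_n(α)}`. -/
noncomputable def hmap (q u : ℕ) (α : ℕ → ℕ) : ℝ :=
  (u : ℝ) / ((q : ℝ) - 1) +
    ∑' n : ℕ, ((α n : ℝ) - (u : ℝ)) / (q : ℝ) ^ (Ssum α n)

/-- `Φ(α) = ∑_{n≥1} α_n q^{-n}`. -/
noncomputable def Phi (q : ℕ) (α : ℕ → ℕ) : ℝ :=
  ∑' n : ℕ, (α n : ℝ) / (q : ℝ) ^ (n + 1)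

/-- `D = {h(α) : α ∈ Θ^{ℕ≥1}}`. -/
def Dset (q u : ℕ) : Set ℝ := {x | ∃ α, ThetaSeq q u α ∧ hmap q u α = x}

/-- `E = {Φ(α) : α ∈ Θ^{ℕ≥1}}`. -/
def Eset (q u : ℕ) : Set ℝ := {y | ∃ α, ThetaSeq q u α ∧ Phi q α = y}

/-! Every digit is at least `1`, so the exponents `S_n(α)` grow at least linearly and truncating
`h(α)` after `k + 1` digits leaves an error of at most `q^{-(k+1)}`. The truncation depends only
on the first `k + 1` digits, which admit at most `(q - 1)^{k+1}` choices, so `D` and its closure lie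
in a union of that many closed intervals of total length `2((q - 1)/q)^{k+1} → 0`. A closed null
set has empty interior. -/

open Finset in
lemma Ssum_strictMono {α : ℕ → ℕ} (hα : ∀ n, 1 ≤ α n) : StrictMono (Ssum α) :=
  strictMono_nat_of_lt_succ fun n => by
    simp only [Ssum, sum_range_succ _ (n + 1)]
    linarith [hα (n + 1)]

lemma Ssum_add_le {α : ℕ → ℕ} (hα : ∀ n, 1 ≤ α n) (k n : ℕ) :
    Ssum α k + n + 1 ≤ Ssum α (n + (k + 1)) := by
  have := (Ssum_strictMono hα).add_le_nat (n + 1) k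
  rw [show n + 1 + k = n + (k + 1) by omega] at this
  omega

lemma succ_le_Ssum {α : ℕ → ℕ} (hα : ∀ n, 1 ≤ α n) (n : ℕ) : n + 1 ≤ Ssum α n := by
  have h0 : Ssum α 0 = α 0 := by simp [Ssum]
  have := (Ssum_strictMono hα).add_le_nat n 0
  rw [Nat.add_zero, h0] at this
  linarith [hα 0]

lemma hasSum_geometric_majorant {q : ℝ} (hq : 1 < q) (a : ℕ) :
    HasSum (fun n : ℕ => (q - 1) * q⁻¹ ^ (a + n + 1)) (q⁻¹ ^ a) := by
  have h := (hasSum_geometric_of_lt_one (by positivity) (inv_lt_one_of_one_lt₀ hq)).mul_left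
    ((q - 1) * q⁻¹ ^ (a + 1))
  have hq' : q - 1 ≠ 0 := by linarith
  have hsum : (q - 1) * q⁻¹ ^ (a + 1) * (1 - q⁻¹)⁻¹ = q⁻¹ ^ a := by
    rw [pow_succ, show 1 - q⁻¹ = (q - 1) * q⁻¹ by field_simp]
    field_simp
  rw [← hsum, show (fun n : ℕ => (q - 1) * q⁻¹ ^ (a + n + 1)) =
    fun n => (q - 1) * q⁻¹ ^ (a + 1) * q⁻¹ ^ n by ext n; ring]
  exact h

noncomputable def hmapTerm (q u : ℕ) (α : ℕ → ℕ) (n : ℕ) : ℝ :=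
  ((α n : ℝ) - u) / (q : ℝ) ^ Ssum α n

noncomputable def hmapTrunc (q u : ℕ) (α : ℕ → ℕ) (k : ℕ) : ℝ :=
  (u : ℝ) / ((q : ℝ) - 1) + ∑ n ∈ Finset.range (k + 1), hmapTerm q u α n

open Finset in
lemma hmapTrunc_congr (q u : ℕ) {α β : ℕ → ℕ} {k : ℕ} (h : ∀ i < k + 1, α i = β i) :
    hmapTrunc q u α k = hmapTrunc q u β k := by
  refine congrArg _ (sum_congr rfl fun n hn => ?_)
  rw [mem_range] at hn
  rw [hmapTerm, hmapTerm, Ssum, Ssum, h n hn,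
    sum_congr rfl fun i hi => h i (by rw [mem_range] at hi; omega)]

section

variable {q u : ℕ} {α : ℕ → ℕ}

lemma ThetaSeq.one_le (hα : ThetaSeq q u α) (n : ℕ) : 1 ≤ α n :=
  (hα n).1

lemma ThetaSeq.one_lt (hα : ThetaSeq q u α) : 1 < q := by
  have := hα 0
  omega

lemma ThetaSeq.abs_sub_le (hu : u ≤ q - 1) (hα : ThetaSeq q u α) (n : ℕ) :
    |(α n : ℝ) - u| ≤ q - 1 := by
  rw [← Nat.cast_pred (by linarith [hα.one_lt])]
  exact abs_sub_le_of_nonneg_of_le (by positivity) (by exact_mod_cast (hα n).2.1)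
    (by positivity) (by exact_mod_cast hu)

lemma abs_hmapTerm_le (hu : u ≤ q - 1) (hα : ThetaSeq q u α) {n e : ℕ} (he : e ≤ Ssum α n) :
    |hmapTerm q u α n| ≤ (q - 1) * (q : ℝ)⁻¹ ^ e := by
  have hq : (1 : ℝ) < q := by exact_mod_cast hα.one_lt
  have hpow : (0 : ℝ) < (q : ℝ) ^ Ssum α n := pow_pos (by linarith) _
  rw [hmapTerm, abs_div, abs_of_pos hpow, div_eq_mul_inv, ← inv_pow]
  exact mul_le_mul (hα.abs_sub_le hu n)
    (pow_le_pow_of_le_one (by positivity) (inv_le_one_of_one_le₀ hq.le) he)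
    (by positivity) (by linarith)

lemma summable_hmapTerm (hu : u ≤ q - 1) (hα : ThetaSeq q u α) : Summable (hmapTerm q u α) :=
  .of_norm_bounded (hasSum_geometric_majorant (by exact_mod_cast hα.one_lt) 0).summable
    fun n => abs_hmapTerm_le hu hα (by rw [zero_add]; exact succ_le_Ssum hα.one_le n)

lemma dist_hmap_hmapTrunc_le (hu : u ≤ q - 1) (hα : ThetaSeq q u α) (k : ℕ) :
    dist (hmap q u α) (hmapTrunc q u α k) ≤ (q : ℝ)⁻¹ ^ (k + 1) := by
  have hq : (1 : ℝ) < q := by exact_mod_cast hα.one_lt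
  have htail : hmap q u α - hmapTrunc q u α k = ∑' n, hmapTerm q u α (n + (k + 1)) := by
    rw [show hmap q u α = u / (q - 1) + ∑' n, hmapTerm q u α n from rfl, hmapTrunc,
      ← (summable_hmapTerm hu hα).sum_add_tsum_nat_add (k + 1)]
    ring
  rw [Real.dist_eq, htail, ← Real.norm_eq_abs]
  calc ‖∑' n, hmapTerm q u α (n + (k + 1))‖ ≤ (q : ℝ)⁻¹ ^ Ssum α k :=
        tsum_of_norm_bounded (hasSum_geometric_majorant hq _)
          fun n => abs_hmapTerm_le hu hα (Ssum_add_le hα.one_le k n)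
    _ ≤ (q : ℝ)⁻¹ ^ (k + 1) :=
        pow_le_pow_of_le_one (by positivity) (inv_le_one_of_one_le₀ hq.le)
          (succ_le_Ssum hα.one_le k)

end

def extendWord {k : ℕ} (w : Fin (k + 1) → ℕ) (n : ℕ) : ℕ :=
  if h : n < k + 1 then w ⟨n, h⟩ else 0

noncomputable def hmapCover (q u k : ℕ) : Set ℝ :=
  ⋃ w ∈ Fintype.piFinset fun _ : Fin (k + 1) => Finset.Icc 1 (q - 1),
    Metric.closedBall (hmapTrunc q u (extendWord w) k) ((q : ℝ)⁻¹ ^ (k + 1))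

section

variable {q u : ℕ}

lemma Dset_subset_hmapCover (hu : u ≤ q - 1) (k : ℕ) : Dset q u ⊆ hmapCover q u k := by
  rintro _ ⟨α, hα, rfl⟩
  refine Set.mem_iUnion₂.2 ⟨fun i => α i, ?_, ?_⟩
  · exact Fintype.mem_piFinset.2 fun i => Finset.mem_Icc.2 ⟨hα.one_le i, (hα i).2.1⟩
  · rw [hmapTrunc_congr q u (β := α) fun i hi => by simp [extendWord, hi]]
    exact Metric.mem_closedBall.2 (dist_hmap_hmapTrunc_le hu hα k)

lemma isClosed_hmapCover (k : ℕ) : IsClosed (hmapCover q u k) :=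
  isClosed_biUnion_finset fun _ _ => Metric.isClosed_closedBall

lemma volume_hmapCover_le (hq : 1 ≤ q) (k : ℕ) :
    volume (hmapCover q u k) ≤ ENNReal.ofReal (2 * (((q : ℝ) - 1) / q) ^ (k + 1)) := by
  calc volume (hmapCover q u k)
      ≤ ∑ w ∈ Fintype.piFinset fun _ : Fin (k + 1) => Finset.Icc 1 (q - 1),
          volume (Metric.closedBall (hmapTrunc q u (extendWord w) k) ((q : ℝ)⁻¹ ^ (k + 1))) :=
        measure_biUnion_finset_le _ _
    _ = ((q - 1) ^ (k + 1) : ℕ) * ENNReal.ofReal (2 * (q : ℝ)⁻¹ ^ (k + 1)) := by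
        simp [Real.volume_closedBall]
    _ = ENNReal.ofReal (2 * (((q : ℝ) - 1) / q) ^ (k + 1)) := by
        rw [← ENNReal.ofReal_natCast, ← ENNReal.ofReal_mul (by positivity)]
        push_cast [Nat.cast_sub hq]
        rw [div_eq_mul_inv, mul_pow]
        ring_nf

lemma volume_closure_Dset (hq : 1 ≤ q) (hu : u ≤ q - 1) : volume (closure (Dset q u)) = 0 := by
  have hr : ((q : ℝ) - 1) / q < 1 := by
    rw [div_lt_one (by exact_mod_cast hq)]
    linarith
  have hr0 : 0 ≤ ((q : ℝ) - 1) / q := div_nonneg (by simpa using hq) (by positivity)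
  have hbound : Tendsto (fun k => ENNReal.ofReal (2 * (((q : ℝ) - 1) / q) ^ (k + 1)))
      atTop (𝓝 0) := by
    have := ENNReal.tendsto_ofReal (((tendsto_pow_atTop_nhds_zero_of_lt_one hr0 hr).comp
      (tendsto_add_atTop_nat 1)).const_mul 2)
    rwa [mul_zero, ENNReal.ofReal_zero] at this
  refine le_antisymm (ge_of_tendsto' hbound fun k => ?_) zero_le
  exact (measure_mono (closure_minimal (Dset_subset_hmapCover hu k) (isClosed_hmapCover k))).trans
    (volume_hmapCover_le hq k)

end

/-- `D` is nowhere dense in `ℝ` and has Lebesgue measure zero. -/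
theorem stmt10 (q : ℕ) (hq : 4 ≤ q) (u : ℕ) (hu : u ≤ q - 1) :
    IsNowhereDense (Dset q u) ∧ volume (Dset q u) = 0 := by
  have hnull := volume_closure_Dset (by omega) hu
  refine ⟨?_, measure_mono_null subset_closure hnull⟩
  simpa [IsNowhereDense, closure_closure] using
    IsNowhereDense.of_isClosed_null isClosed_closure hnull
end

section
/- The set D is a nonempty compact perfect subset of ℝ (it is closed and has no isolated points); in particular D is uncountable. -/
open Filter Topology MeasureTheory

/-! Since `u/(q-1) = 0.uuu…` in base `q`, `h(α)` is the base-`q` number whose digit at position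
`S_n(α)` is `α_n` and whose other digits are all `u`. Every `α_n ≥ 1`, so this expansion has
infinitely many nonzero digits and is therefore the only base-`q` expansion of `h(α)`; as
`α_n ≠ u`, the positions `S_n(α)`, and with them `α`, can be read off it. Thus `h` is injective on
`Θ^ℕ`, and it is continuous by the Weierstrass M-test. Hence `D` is a continuous injective image
of the compact space `Θ^ℕ`, which has no isolated points because `Θ` has at least two elements
when `q ≥ 4`; a nonempty perfect subset of `ℝ` is uncountable. -/

open Set

theorem Preperfect.image {X Y : Type*} [TopologicalSpace X] [TopologicalSpace Y] {s : Set X}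
    {f : X → Y} (hs : Preperfect s) (hf : ContinuousOn f s) (hinj : InjOn f s) :
    Preperfect (f '' s) := by
  rintro _ ⟨x, hx, rfl⟩
  rw [accPt_iff_nhds]
  intro V hV
  obtain ⟨U, hU, hUV⟩ := mem_nhdsWithin_iff_exists_mem_nhds_inter.1 (hf x hx hV)
  obtain ⟨y, ⟨hyU, hys⟩, hyx⟩ := accPt_iff_nhds.1 (hs x hx) U hU
  exact ⟨f y, ⟨hUV ⟨hyU, hys⟩, mem_image_of_mem f hys⟩, fun h => hyx (hinj hys hx h)⟩

theorem preperfect_univ_pi {ι : Type*} [Infinite ι] {X : ι → Type*}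
    [∀ i, TopologicalSpace (X i)] {t : ∀ i, Set (X i)} (ht : ∀ i, (t i).Nontrivial) :
    Preperfect (univ.pi t) := by
  classical
  intro x hx
  rw [accPt_iff_nhds]
  intro U hU
  rw [nhds_pi, Filter.mem_pi] at hU
  obtain ⟨I, hI, V, hV, hVU⟩ := hU
  obtain ⟨j, hj⟩ := hI.infinite_compl.nonempty
  obtain ⟨y, hy, hyx⟩ := (ht j).exists_ne (x j)
  refine ⟨Function.update x j y,
    ⟨hVU fun i hi => ?_, (update_mem_pi_iff_of_mem hx).2 fun _ => hy⟩, ?_⟩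
  · rw [Function.update_of_ne (ne_of_mem_of_not_mem hi hj)]
    exact mem_of_mem_nhds (hV i)
  · exact fun h => hyx (by simpa using congrFun h j)

theorem Perfect.not_countable {α : Type*} [MetricSpace α] [CompleteSpace α] {C : Set α}
    (hC : Perfect C) (hne : C.Nonempty) : ¬ C.Countable := by
  obtain ⟨f, hfC, -, hf⟩ := hC.exists_nat_bool_injection hne
  intro hcount
  have : Countable (ℕ → Bool) :=
    countable_univ_iff.1 <| (mapsTo_univ_iff.2 fun x => hfC (mem_range_self x)).countable_of_injOn
      hf.injOn hcount
  rw [← Cardinal.mk_le_aleph0_iff] at this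
  simpa using this.trans_lt Cardinal.aleph0_lt_continuum

namespace Real

variable {b : ℕ}

theorem ofDigits_pos {x : ℕ → Fin b} {k : ℕ} (hk : (x k : ℕ) ≠ 0) : 0 < ofDigits x := by
  refine summable_ofDigitsTerm.tsum_pos (fun _ => ofDigitsTerm_nonneg) k ?_
  have : 0 < b := (x k).pos
  have : (0 : ℝ) < x k := by exact_mod_cast Nat.pos_of_ne_zero hk
  unfold ofDigitsTerm
  positivity

theorem ofDigits_lt_ofDigits {x y : ℕ → Fin b} {n : ℕ} (hxy : ∀ i < n, x i = y i)
    (hn : x n < y n) (hy : ∃ k > n, (y k : ℕ) ≠ 0) : ofDigits x < ofDigits y := by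
  obtain ⟨k, hkn, hk⟩ := hy
  have hhead : ∑ i ∈ Finset.range n, ofDigitsTerm x i = ∑ i ∈ Finset.range n, ofDigitsTerm y i :=
    Finset.sum_congr rfl fun i hi => by simp [ofDigitsTerm, hxy i (Finset.mem_range.1 hi)]
  rw [ofDigits_eq_sum_add_ofDigits x (n + 1), ofDigits_eq_sum_add_ofDigits y (n + 1),
    Finset.sum_range_succ, Finset.sum_range_succ, hhead]
  set c := ((b : ℝ) ^ (n + 1))⁻¹
  have hc : 0 < c := by have : 0 < b := (x n).pos; positivity
  have hdigit : ofDigitsTerm x n + c ≤ ofDigitsTerm y n := by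
    have : (x n : ℝ) + 1 ≤ y n := by exact_mod_cast hn
    unfold ofDigitsTerm
    nlinarith
  have htail_x : c * ofDigits (fun i => x (i + (n + 1))) ≤ c :=
    mul_le_of_le_one_right hc.le (ofDigits_le_one _)
  have htail_y : 0 < c * ofDigits (fun i => y (i + (n + 1))) :=
    mul_pos hc (ofDigits_pos (k := k - (n + 1)) (by rwa [Nat.sub_add_cancel hkn]))
  linarith

theorem ofDigits_injOn :
    InjOn ofDigits {x : ℕ → Fin b | ∃ᶠ k in Filter.atTop, (x k : ℕ) ≠ 0} := by
  classical
  intro x hx y hy hxy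
  by_contra hne
  have hex : ∃ n, x n ≠ y n := Function.ne_iff.1 hne
  have hbefore : ∀ i < Nat.find hex, x i = y i := fun i hi => not_not.1 (Nat.find_min hex hi)
  rcases lt_or_gt_of_ne (Nat.find_spec hex) with hlt | hgt
  · exact (ofDigits_lt_ofDigits hbefore hlt (Filter.frequently_atTop'.1 hy _)).ne hxy
  · exact (ofDigits_lt_ofDigits (fun i hi => (hbefore i hi).symm) hgt
      (Filter.frequently_atTop'.1 hx _)).ne' hxy

end Real

section Theta

variable {q u : ℕ} {α : ℕ → ℕ}

def thetaSet (q u : ℕ) : Set ℕ := {a | 1 ≤ a ∧ a ≤ q - 1 ∧ a ≠ u}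

theorem thetaSet_finite : (thetaSet q u).Finite :=
  (finite_Iic (q - 1)).subset fun _ ha => ha.2.1

theorem thetaSet_nontrivial (hq : 4 ≤ q) : (thetaSet q u).Nontrivial := by
  simp only [Set.Nontrivial, thetaSet, mem_ofPred_eq]
  rcases (by omega : u ≠ 1 ∧ u ≠ 2 ∨ u ≠ 1 ∧ u ≠ 3 ∨ u ≠ 2 ∧ u ≠ 3) with h | h | h
  · exact ⟨1, by omega, 2, by omega, by omega⟩
  · exact ⟨1, by omega, 3, by omega, by omega⟩
  · exact ⟨2, by omega, 3, by omega, by omega⟩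

theorem setOf_thetaSeq_eq_pi : {α | ThetaSeq q u α} = univ.pi fun _ => thetaSet q u := by
  ext α
  simp [ThetaSeq, thetaSet]

theorem ThetaSeq.pos (hα : ThetaSeq q u α) (n : ℕ) : 0 < α n := (hα n).1

theorem Ssum_succ (α : ℕ → ℕ) (n : ℕ) : Ssum α (n + 1) = Ssum α n + α (n + 1) :=
  Finset.sum_range_succ α (n + 1)

theorem strictMono_Ssum (hα : ∀ n, 0 < α n) : StrictMono (Ssum α) :=
  strictMono_nat_of_lt_succ fun n => by rw [Ssum_succ]; have := hα (n + 1); omega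

theorem lt_Ssum (hα : ∀ n, 0 < α n) (n : ℕ) : n < Ssum α n := by
  have hle := (strictMono_Ssum hα).add_le_nat n 0
  rw [add_zero, Ssum, Finset.sum_range_one] at hle
  have := hα 0
  omega

/-- The digit of `h(α)` at position `m + 1` after the base-`q` point. -/
noncomputable def hDigit (u : ℕ) (α : ℕ → ℕ) (m : ℕ) : ℕ :=
  open Classical in if h : m + 1 ∈ range (Ssum α) then α h.choose else u

theorem hDigit_of_not_mem {m : ℕ} (h : m + 1 ∉ range (Ssum α)) : hDigit u α m = u :=
  dif_neg h

theorem hDigit_Ssum_sub_one (hα : ∀ n, 0 < α n) (n : ℕ) : hDigit u α (Ssum α n - 1) = α n := by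
  have hS : Ssum α n - 1 + 1 = Ssum α n := Nat.sub_add_cancel (by have := lt_Ssum hα n; omega)
  have hmem : Ssum α n - 1 + 1 ∈ range (Ssum α) := ⟨n, hS.symm⟩
  rw [hDigit, dif_pos hmem]
  exact congrArg α ((strictMono_Ssum hα).injective (hmem.choose_spec.trans hS))

theorem hDigit_lt (hu : u < q) (hα : ThetaSeq q u α) (m : ℕ) : hDigit u α m < q := by
  unfold hDigit
  split_ifs with h
  · have := (hα h.choose).2.1
    omega
  · exact hu

theorem frequently_hDigit_ne_zero (hα : ThetaSeq q u α) :
    ∃ᶠ m in Filter.atTop, hDigit u α m ≠ 0 := by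
  refine Filter.frequently_atTop.2 fun M => ⟨Ssum α M - 1, ?_, ?_⟩
  · have := lt_Ssum hα.pos M
    omega
  · rw [hDigit_Ssum_sub_one hα.pos]
    exact (hα.pos M).ne'

theorem succ_mem_range_Ssum_iff (hα : ThetaSeq q u α) {m : ℕ} :
    m + 1 ∈ range (Ssum α) ↔ hDigit u α m ≠ u := by
  refine ⟨?_, not_imp_comm.1 hDigit_of_not_mem⟩
  rintro ⟨n, hn⟩
  rw [show m = Ssum α n - 1 by omega, hDigit_Ssum_sub_one hα.pos]
  exact (hα n).2.2

/-- Since `α_n ≠ u`, the digits different from `u` mark the partial sums `S_n(α)`. -/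
theorem hDigit_injOn : InjOn (hDigit u) {α | ThetaSeq q u α} := by
  intro α hα β hβ h
  have zero_not_mem : ∀ γ, ThetaSeq q u γ → 0 ∉ range (Ssum γ) := fun γ hγ ⟨n, hn⟩ => by
    have := lt_Ssum hγ.pos n
    omega
  have hrange : range (Ssum α) = range (Ssum β) := by
    ext (_ | m)
    · exact iff_of_false (zero_not_mem α hα) (zero_not_mem β hβ)
    · rw [succ_mem_range_Ssum_iff hα, succ_mem_range_Ssum_iff hβ, h]
  have hS := ((strictMono_Ssum hα.pos).range_inj (strictMono_Ssum hβ.pos)).1 hrange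
  funext n
  rw [← hDigit_Ssum_sub_one hα.pos n, ← hDigit_Ssum_sub_one (u := u) hβ.pos n, h, hS]

theorem tsum_hDigit_sub (q : ℕ) (hα : ∀ n, 0 < α n) :
    ∑' m, ((hDigit u α m : ℝ) - u) / (q : ℝ) ^ (m + 1) =
      ∑' n, ((α n : ℝ) - u) / (q : ℝ) ^ Ssum α n := by
  have hinj : Function.Injective fun n => Ssum α n - 1 := fun a b h => by
    have := lt_Ssum hα a
    have := lt_Ssum hα b
    exact (strictMono_Ssum hα).injective (by simp only at h; omega)
  rw [← hinj.tsum_eq]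
  · refine tsum_congr fun n => ?_
    rw [hDigit_Ssum_sub_one hα, Nat.sub_add_cancel (by have := lt_Ssum hα n; omega)]
  · intro m hm
    by_contra hmr
    refine hm ?_
    show ((hDigit u α m : ℝ) - u) / (q : ℝ) ^ (m + 1) = 0
    rw [hDigit_of_not_mem fun ⟨n, hn⟩ => hmr ⟨n, by simp only; omega⟩, sub_self, zero_div]

theorem hasSum_const_div_pow_succ (hq : 1 < q) (c : ℝ) :
    HasSum (fun m : ℕ => c / (q : ℝ) ^ (m + 1)) (c / ((q : ℝ) - 1)) := by
  have hq' : (1 : ℝ) < q := by exact_mod_cast hq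
  have hterm : (fun m : ℕ => c / (q : ℝ) ^ (m + 1)) = fun m => c / q * ((q : ℝ)⁻¹) ^ m := by
    funext m
    rw [pow_succ, inv_pow]
    field_simp
  have hsum : c / ((q : ℝ) - 1) = c / q * (1 - (q : ℝ)⁻¹)⁻¹ := by
    have : (q : ℝ) - 1 ≠ 0 := by linarith
    field_simp
  rw [hterm, hsum]
  exact (hasSum_geometric_of_lt_one (by positivity) (inv_lt_one_of_one_lt₀ hq')).mul_left _

theorem hmap_eq_ofDigits (hq : 1 < q) (hu : u < q) (hα : ThetaSeq q u α) :
    hmap q u α = Real.ofDigits fun m => (⟨hDigit u α m, hDigit_lt hu hα m⟩ : Fin q) := by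
  set d : ℕ → Fin q := fun m => ⟨hDigit u α m, hDigit_lt hu hα m⟩
  have hdigits : ∑' m, ((hDigit u α m : ℝ) - u) / (q : ℝ) ^ (m + 1) =
      Real.ofDigits d - u / ((q : ℝ) - 1) := by
    rw [Real.ofDigits, ← (Real.summable_ofDigitsTerm.hasSum.sub
      (hasSum_const_div_pow_succ hq u)).tsum_eq]
    exact tsum_congr fun m => by simp only [Real.ofDigitsTerm, d]; ring
  rw [hmap, ← tsum_hDigit_sub q hα.pos, hdigits]
  ring

theorem hmap_injOn (hq : 1 < q) (hu : u < q) : InjOn (hmap q u) {α | ThetaSeq q u α} := by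
  intro α hα β hβ h
  rw [hmap_eq_ofDigits hq hu hα, hmap_eq_ofDigits hq hu hβ] at h
  have hdigits := Real.ofDigits_injOn (frequently_hDigit_ne_zero hα)
    (frequently_hDigit_ne_zero hβ) h
  exact hDigit_injOn hα hβ (funext fun m => congrArg Fin.val (congrFun hdigits m))

theorem continuousOn_hmap (hq : 1 < q) (hu : u < q) :
    ContinuousOn (hmap q u) {α | ThetaSeq q u α} := by
  have hq' : (1 : ℝ) < q := by exact_mod_cast hq
  unfold hmap
  refine continuousOn_const.add (continuousOn_tsum (u := fun n => ((q : ℝ)⁻¹) ^ n)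
    (fun n => Continuous.continuousOn ?_)
    (summable_geometric_of_lt_one (by positivity) (inv_lt_one_of_one_lt₀ hq')) ?_)
  · have : Continuous fun α : ℕ → ℕ => (α n, Ssum α n) :=
      (continuous_apply n).prodMk (continuous_finsetSum _ fun i _ => continuous_apply i)
    exact (continuous_of_discreteTopology
      (f := fun p : ℕ × ℕ => ((p.1 : ℝ) - u) / (q : ℝ) ^ p.2)).comp this
  · intro n α hα
    have hnum : |(α n : ℝ) - u| ≤ q :=
      abs_sub_le_of_nonneg_of_le (by positivity)
        (by exact_mod_cast (by have := (hα n).2.1; omega : α n ≤ q)) (by positivity)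
        (by exact_mod_cast hu.le)
    calc ‖((α n : ℝ) - u) / (q : ℝ) ^ Ssum α n‖ = |(α n : ℝ) - u| / (q : ℝ) ^ Ssum α n := by
          rw [Real.norm_eq_abs, abs_div, abs_of_pos (pow_pos (by linarith : (0 : ℝ) < q) _)]
      _ ≤ q / (q : ℝ) ^ (n + 1) :=
          div_le_div₀ (by positivity) hnum (by positivity)
            (pow_le_pow_right₀ hq'.le (lt_Ssum hα.pos n))
      _ = ((q : ℝ)⁻¹) ^ n := by
          rw [pow_succ', inv_pow]
          field_simp

end Theta

/-- `D` is a nonempty compact perfect subset of `ℝ`; in particular `D`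
is uncountable. -/
theorem stmt11 (q : ℕ) (hq : 4 ≤ q) (u : ℕ) (hu : u ≤ q - 1) :
    (Dset q u).Nonempty ∧ IsCompact (Dset q u) ∧ Perfect (Dset q u) ∧
      ¬ (Dset q u).Countable := by
  have hq1 : 1 < q := by omega
  have hu' : u < q := by omega
  have hD : Dset q u = hmap q u '' {α | ThetaSeq q u α} := rfl
  have hΘ : ∀ _ : ℕ, (thetaSet q u).Nontrivial := fun _ => thetaSet_nontrivial hq
  have hne : (Dset q u).Nonempty := by
    rw [hD, setOf_thetaSeq_eq_pi]
    exact (univ_pi_nonempty_iff.2 fun n => (hΘ n).nonempty).image _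
  have hcompact : IsCompact (Dset q u) := by
    rw [hD]
    refine IsCompact.image_of_continuousOn ?_ (continuousOn_hmap hq1 hu')
    rw [setOf_thetaSeq_eq_pi]
    exact isCompact_univ_pi fun _ => thetaSet_finite.isCompact
  have hpre : Preperfect {α | ThetaSeq q u α} := by
    rw [setOf_thetaSeq_eq_pi]
    exact preperfect_univ_pi hΘ
  have hperfect : Perfect (Dset q u) :=
    ⟨hcompact.isClosed, hD ▸ hpre.image (continuousOn_hmap hq1 hu') (hmap_injOn hq1 hu')⟩
  exact ⟨hne, hcompact, hperfect, hperfect.not_countable hne⟩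
end

section
/- If q ≥ 5 and 2 ≤ u ≤ q−3, then g is not monotonic on D: there exist α, β, γ, δ ∈ Θ^{ℕ≥1} such that h(α) < h(β) with Φ(α) < Φ(β), and h(γ) < h(δ) with Φ(γ) > Φ(δ). -/
open Filter Topology MeasureTheory

/-!
Constant sequences already witness both behaviours. On the constant sequence `a` both series are
geometric: `Φ(a,a,…) = a/(q-1)` and `h(a,a,…) = u/(q-1) + (a-u)/(q^a-1)`. Thus `Φ` increases with `a`,
while `h(a,a,…)` lies below `u/(q-1)` for `a < u` and above it for `a > u`, but decreases in `a` once
`a > u`, since the numerator `a - u` grows linearly and the denominator `q^a - 1` geometrically.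
Comparing `a = 1` with `a = u+1` gives a pair on which `g` increases, comparing `a = u+1` with
`a = q-1` one on which it decreases.
-/

lemma tsum_div_pow_succ {Q : ℝ} (hQ : 1 < Q) (c : ℝ) :
    ∑' n : ℕ, c / Q ^ (n + 1) = c / (Q - 1) := by
  have hterm : ∀ n : ℕ, c / Q ^ (n + 1) = c / Q * Q⁻¹ ^ n := fun n => by
    rw [pow_succ, inv_pow]
    field_simp
  rw [tsum_congr hterm, tsum_mul_left,
    tsum_geometric_of_lt_one (by positivity) (inv_lt_one_of_one_lt₀ hQ)]
  have : Q - 1 ≠ 0 := by linarith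
  field_simp

lemma Ssum_const (a n : ℕ) : Ssum (fun _ => a) n = a * (n + 1) := by
  simp [Ssum, mul_comm]

lemma thetaSeq_const {q u a : ℕ} (ha : 1 ≤ a) (haq : a ≤ q - 1) (hau : a ≠ u) :
    ThetaSeq q u fun _ => a :=
  fun _ => ⟨ha, haq, hau⟩

section ConstantSequences

variable {q : ℕ}

lemma Phi_const (hq : 2 ≤ q) (a : ℕ) : Phi q (fun _ => a) = a / ((q : ℝ) - 1) :=
  tsum_div_pow_succ (by exact_mod_cast hq) _

lemma hmap_const (hq : 2 ≤ q) (u : ℕ) {a : ℕ} (ha : 1 ≤ a) :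
    hmap q u (fun _ => a) = u / ((q : ℝ) - 1) + ((a : ℝ) - u) / ((q : ℝ) ^ a - 1) := by
  have hQ : (1 : ℝ) < (q : ℝ) ^ a := one_lt_pow₀ (by exact_mod_cast hq) (by omega)
  simp only [hmap, Ssum_const, pow_mul, ← tsum_div_pow_succ hQ]

lemma Phi_const_strictMono (hq : 2 ≤ q) : StrictMono fun a : ℕ => Phi q fun _ => a := by
  intro a b hab
  have hq1 : (0 : ℝ) < q - 1 := by
    have : (2 : ℝ) ≤ q := by exact_mod_cast hq
    linarith
  simp only [Phi_const hq]
  exact div_lt_div_of_pos_right (by exact_mod_cast hab) hq1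

lemma hmap_const_lt_of_lt_of_lt (hq : 2 ≤ q) {u a b : ℕ} (ha : 1 ≤ a) (hau : a < u)
    (hub : u < b) : hmap q u (fun _ => a) < hmap q u (fun _ => b) := by
  have hq1 : (1 : ℝ) < q := by exact_mod_cast hq
  have hneg : ((a : ℝ) - u) / ((q : ℝ) ^ a - 1) < 0 :=
    div_neg_of_neg_of_pos (by simpa using hau) (by linarith [one_lt_pow₀ hq1 (by omega : a ≠ 0)])
  have hpos : 0 < ((b : ℝ) - u) / ((q : ℝ) ^ b - 1) :=
    div_pos (by simpa using hub) (by linarith [one_lt_pow₀ hq1 (by omega : b ≠ 0)])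
  rw [hmap_const hq u ha, hmap_const hq u (by omega)]
  linarith

lemma hmap_const_succ_lt (hq : 2 ≤ q) {u a : ℕ} (hua : u < a) :
    hmap q u (fun _ => a + 1) < hmap q u (fun _ => a) := by
  have hq2 : (2 : ℝ) ≤ q := by exact_mod_cast hq
  set Q : ℝ := (q : ℝ) ^ a
  have hQ : 2 ≤ Q := hq2.trans (le_self_pow₀ (by linarith) (by omega))
  have hk : (1 : ℝ) ≤ a - u := by
    have : (u : ℝ) + 1 ≤ a := by exact_mod_cast hua
    linarith
  rw [hmap_const hq u (by omega), hmap_const hq u (by omega), add_lt_add_iff_left, pow_succ,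
    div_lt_div_iff₀ (by nlinarith) (by linarith)]
  push_cast
  -- `(a-u+1)(Q-1) < (a-u)(qQ-1)` reduces to `(a-u+1) Q < (a-u) q Q + 1`, and `q ≥ 2`.
  have hkQ : (0 : ℝ) ≤ (a - u) * Q := mul_nonneg (by linarith) (by linarith)
  nlinarith [mul_le_mul_of_nonneg_left hq2 hkQ]

lemma hmap_const_strictAntiOn (hq : 2 ≤ q) (u : ℕ) :
    StrictAntiOn (fun a : ℕ => hmap q u fun _ => a) (Set.Ici (u + 1)) :=
  strictAntiOn_Ici_of_lt_pred fun m hm => by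
    obtain ⟨a, rfl⟩ : ∃ a, m = a + 1 := ⟨m - 1, by omega⟩
    simpa [Order.pred_eq_sub_one] using hmap_const_succ_lt hq (by omega : u < a)

end ConstantSequences

theorem stmt15_general (q : ℕ) (u : ℕ) (hu2 : 2 ≤ u) (hu3 : u ≤ q - 3) :
    ∃ α β γ δ : ℕ → ℕ,
      ThetaSeq q u α ∧ ThetaSeq q u β ∧ ThetaSeq q u γ ∧ ThetaSeq q u δ ∧
      hmap q u α < hmap q u β ∧ Phi q α < Phi q β ∧
      hmap q u γ < hmap q u δ ∧ Phi q δ < Phi q γ := by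
  have hq : 2 ≤ q := by omega
  refine ⟨fun _ => 1, fun _ => u + 1, fun _ => q - 1, fun _ => u + 1,
    thetaSeq_const le_rfl (by omega) (by omega), thetaSeq_const (by omega) (by omega) (by omega),
    thetaSeq_const (by omega) le_rfl (by omega), thetaSeq_const (by omega) (by omega) (by omega),
    hmap_const_lt_of_lt_of_lt hq le_rfl (by omega) (by omega),
    Phi_const_strictMono hq (by omega),
    hmap_const_strictAntiOn hq u (Set.mem_Ici.2 le_rfl) (Set.mem_Ici.2 (by omega)) (by omega),
    Phi_const_strictMono hq (by omega)⟩

/-- if `q ≥ 5` and `2 ≤ u ≤ q-3`, then `g` is not monotonic on `D`. -/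
theorem stmt15 (q : ℕ) (hq : 5 ≤ q) (u : ℕ) (hu2 : 2 ≤ u) (hu3 : u ≤ q - 3) :
    ∃ α β γ δ : ℕ → ℕ,
      ThetaSeq q u α ∧ ThetaSeq q u β ∧ ThetaSeq q u γ ∧ ThetaSeq q u δ ∧
      hmap q u α < hmap q u β ∧ Phi q α < Phi q β ∧
      hmap q u γ < hmap q u δ ∧ Phi q δ < Phi q γ :=
  stmt15_general q u hu2 hu3
end
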